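/- arXiv:1607.01254 — 2 statements merged into one kernel-verified Lean document; each statement's English description precedes it below -/
import Mathlib

section
/- The geometric Bonferroni mean of trapezoidal components preserves monotone ordering: if for each i, a_{i1} ≤ a_{i2} ≤ a_{i3} ≤ a_{i4} with all a_{ik} > 0 and r, s ≥ 0 with r + s > 0, then the aggregated components B_k = ∏_{i≠j} (r·a_{ik} + s·a_{jk})^{1/(n(n-1))} satisfy B_1 ≤ B_2 ≤ B_3 ≤ B_4. -/
open Finset

/-- Componentwise geometric Bonferroni aggregation (without the 1/(r+s) factor). -/
noncomputable def bonfProd (n : ℕ) (r s : ℝ) (a : Fin n → ℝ) : ℝ :=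
  ∏ p ∈ Finset.univ.filter (fun p : Fin n × Fin n => p.1 ≠ p.2),
    (r * a p.1 + s * a p.2) ^ (((n : ℝ) * ((n : ℝ) - 1))⁻¹)

lemma bonfProd_mono (n : ℕ) (hn : 2 ≤ n) (r s : ℝ) (hr : 0 ≤ r) (hs : 0 ≤ s)
    (a b : Fin n → ℝ) (ha : ∀ i, 0 < a i) (hab : ∀ i, a i ≤ b i) :
    bonfProd n r s a ≤ bonfProd n r s b := by
  have hexp : 0 ≤ ((n : ℝ) * ((n : ℝ) - 1))⁻¹ := by
    have h2 : (2:ℝ) ≤ (n:ℝ) := by exact_mod_cast hn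
    have : 0 < (n:ℝ) * ((n:ℝ) - 1) := by nlinarith
    exact le_of_lt (inv_pos.mpr this)
  unfold bonfProd
  apply Finset.prod_le_prod
  · intro p _
    have := ha p.1; have := ha p.2
    positivity
  · intro p _
    apply Real.rpow_le_rpow
    · have := ha p.1; have := ha p.2; positivity
    · have := hab p.1; have := hab p.2; nlinarith
    · exact hexp

/-- The geometric Bonferroni mean preserves the monotone ordering of trapezoid components. -/
theorem bonferroni_preserves_component_order
    (n : ℕ) (hn : 2 ≤ n) (r s : ℝ) (hr : 0 ≤ r) (hs : 0 ≤ s) (hrs : 0 < r + s)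
    (a1 a2 a3 a4 : Fin n → ℝ)
    (hpos1 : ∀ i, 0 < a1 i) (hpos2 : ∀ i, 0 < a2 i)
    (hpos3 : ∀ i, 0 < a3 i) (hpos4 : ∀ i, 0 < a4 i)
    (h12 : ∀ i, a1 i ≤ a2 i) (h23 : ∀ i, a2 i ≤ a3 i) (h34 : ∀ i, a3 i ≤ a4 i) :
    bonfProd n r s a1 ≤ bonfProd n r s a2 ∧
    bonfProd n r s a2 ≤ bonfProd n r s a3 ∧
    bonfProd n r s a3 ≤ bonfProd n r s a4 := by
  exact ⟨bonfProd_mono n hn r s hr hs a1 a2 hpos1 h12,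
         bonfProd_mono n hn r s hr hs a2 a3 hpos2 h23,
         bonfProd_mono n hn r s hr hs a3 a4 hpos3 h34⟩
end

section
/- The scalar geometric Bonferroni mean dominates the geometric mean: for positive reals a_1,…,a_n and r, s ≥ 0 with r + s > 0, GBM^{r,s}(a_1,…,a_n) ≥ (∏_{i=1}^n a_i)^{1/n}, with equality when all a_i are equal. -/
/-!
By weighted AM–GM each factor satisfies `r a_i + s a_j ≥ (r + s) a_i^{r/(r+s)} a_j^{s/(r+s)}`,
with equality when `a_i = a_j`. Over the `n (n - 1)` ordered pairs `i ≠ j` every index occurs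
`n - 1` times in each slot, so these lower bounds multiply to `(r + s)^{n(n-1)} (∏ a_i)^{n-1}`,
and the `n(n-1)`-th root of that, divided by `r + s`, is the geometric mean.
-/

open Finset

noncomputable def GBM (n : ℕ) (r s : ℝ) (a : Fin n → ℝ) : ℝ :=
  (1 / (r + s)) *
    ∏ p ∈ Finset.univ.filter (fun p : Fin n × Fin n => p.1 ≠ p.2),
      (r * a p.1 + s * a p.2) ^ (((n : ℝ) * ((n : ℝ) - 1))⁻¹)

namespace Finset

variable {ι M : Type*} [DecidableEq ι] [CommMonoid M]

theorem prod_offDiag_fst (s : Finset ι) (f : ι → M) :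
    ∏ p ∈ s.offDiag, f p.1 = (∏ i ∈ s, f i) ^ (#s - 1) := by
  rw [prod_finset_product _ s (s.erase ·) fun _ => by simp only [mem_offDiag, mem_erase]; tauto,
    ← prod_pow]
  exact prod_congr rfl fun i hi => by simp only [prod_const, card_erase_of_mem hi]

theorem prod_offDiag_snd (s : Finset ι) (f : ι → M) :
    ∏ p ∈ s.offDiag, f p.2 = (∏ i ∈ s, f i) ^ (#s - 1) := by
  rw [prod_finset_product_right _ s (s.erase ·)
    fun _ => by simp only [mem_offDiag, mem_erase]; tauto, ← prod_pow]
  exact prod_congr rfl fun i hi => by simp only [prod_const, card_erase_of_mem hi]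

end Finset

namespace Real

variable {r s x y : ℝ}

theorem add_mul_rpow_mul_rpow_le (hr : 0 ≤ r) (hs : 0 ≤ s) (hrs : 0 < r + s)
    (hx : 0 ≤ x) (hy : 0 ≤ y) :
    (r + s) * (x ^ (r / (r + s)) * y ^ (s / (r + s))) ≤ r * x + s * y := by
  have hw : r / (r + s) + s / (r + s) = 1 := by field_simp
  calc (r + s) * (x ^ (r / (r + s)) * y ^ (s / (r + s)))
      ≤ (r + s) * (r / (r + s) * x + s / (r + s) * y) := by
        gcongr
        exact geom_mean_le_arith_mean2_weighted (by positivity) (by positivity) hx hy hw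
    _ = r * x + s * y := by field_simp

theorem rpow_div_add_mul_rpow_div_add (hrs : r + s ≠ 0) (hx : 0 ≤ x) :
    x ^ (r / (r + s)) * x ^ (s / (r + s)) = x := by
  have hw : r / (r + s) + s / (r + s) = 1 := by rw [← add_div, div_self hrs]
  rw [← rpow_add' hx (hw ▸ one_ne_zero), hw, rpow_one]

theorem one_div_mul_pow_mul_pow_rpow {n : ℕ} (hn : 2 ≤ n) {c A : ℝ} (hc : 0 < c)
    (hA : 0 ≤ A) :
    1 / c * (c ^ (n * (n - 1)) * A ^ (n - 1)) ^ ((n : ℝ) * ((n : ℝ) - 1))⁻¹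
      = A ^ (n : ℝ)⁻¹ := by
  have hN : ((n * (n - 1) : ℕ) : ℝ) = n * (n - 1) := by
    push_cast [Nat.cast_sub (by omega : 1 ≤ n)]; ring
  have hn1 : ((n : ℝ) - 1) ≠ 0 := by
    have : (2 : ℝ) ≤ n := by exact_mod_cast hn
    linarith
  rw [mul_rpow (by positivity) (by positivity), ← hN,
    pow_rpow_inv_natCast hc.le (Nat.mul_ne_zero (by omega) (by omega)), hN,
    ← rpow_natCast A, ← rpow_mul hA, Nat.cast_sub (by omega : 1 ≤ n), Nat.cast_one]
  field_simp

end Real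

section OffDiag

open Fintype Real

variable {ι : Type*} [Fintype ι] [DecidableEq ι] {r s : ℝ} {a : ι → ℝ}

theorem prod_offDiag_add_mul_rpow_mul_rpow (hrs : r + s ≠ 0) (ha : ∀ i, 0 ≤ a i) :
    ∏ p ∈ univ.offDiag, (r + s) * (a p.1 ^ (r / (r + s)) * a p.2 ^ (s / (r + s)))
      = (r + s) ^ (card ι * (card ι - 1)) * (∏ i, a i) ^ (card ι - 1) := by
  rw [prod_mul_distrib, prod_const, offDiag_card, card_univ, ← Nat.mul_sub_one, prod_mul_distrib,
    prod_offDiag_fst _ fun i => a i ^ (r / (r + s)),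
    prod_offDiag_snd _ fun i => a i ^ (s / (r + s)), ← mul_pow, ← prod_mul_distrib, card_univ]
  simp only [rpow_div_add_mul_rpow_div_add hrs (ha _)]

theorem pow_mul_prod_pow_le_prod_offDiag (hr : 0 ≤ r) (hs : 0 ≤ s) (hrs : 0 < r + s)
    (ha : ∀ i, 0 ≤ a i) :
    (r + s) ^ (card ι * (card ι - 1)) * (∏ i, a i) ^ (card ι - 1)
      ≤ ∏ p ∈ univ.offDiag, (r * a p.1 + s * a p.2) := by
  rw [← prod_offDiag_add_mul_rpow_mul_rpow hrs.ne' ha]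
  exact prod_le_prod (fun p _ => by have := ha p.1; have := ha p.2; positivity)
    fun p _ => add_mul_rpow_mul_rpow_le hr hs hrs (ha _) (ha _)

theorem pow_mul_prod_pow_eq_prod_offDiag (hrs : r + s ≠ 0) (ha : ∀ i, 0 ≤ a i)
    (h : ∀ i j, a i = a j) :
    (r + s) ^ (card ι * (card ι - 1)) * (∏ i, a i) ^ (card ι - 1)
      = ∏ p ∈ univ.offDiag, (r * a p.1 + s * a p.2) := by
  rw [← prod_offDiag_add_mul_rpow_mul_rpow hrs ha]
  exact prod_congr rfl fun p _ => by
    rw [h p.2 p.1, rpow_div_add_mul_rpow_div_add hrs (ha _), add_mul]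

end OffDiag

/-- The geometric Bonferroni mean dominates the geometric mean, with equality
when all inputs are equal. -/
theorem GBM_ge_geometric_mean
    (n : ℕ) (hn : 2 ≤ n) (r s : ℝ) (hr : 0 ≤ r) (hs : 0 ≤ s) (hrs : 0 < r + s)
    (a : Fin n → ℝ) (ha : ∀ i, 0 < a i) :
    (∏ i : Fin n, a i) ^ ((n : ℝ)⁻¹) ≤ GBM n r s a ∧
    ((∀ i j, a i = a j) → GBM n r s a = (∏ i : Fin n, a i) ^ ((n : ℝ)⁻¹)) := by
  have ha₀ : ∀ i, 0 ≤ a i := fun i => (ha i).le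
  have hGBM : GBM n r s a = 1 / (r + s) *
      (∏ p ∈ univ.offDiag, (r * a p.1 + s * a p.2)) ^ ((n : ℝ) * ((n : ℝ) - 1))⁻¹ := by
    have hoff : univ.filter (fun p : Fin n × Fin n => p.1 ≠ p.2) = univ.offDiag := by ext; simp
    rw [GBM, hoff, Real.finsetProd_rpow _ _ fun p _ => by
      have := ha₀ p.1; have := ha₀ p.2; positivity]
  have hlower := pow_mul_prod_pow_le_prod_offDiag hr hs hrs ha₀
  have hequal := pow_mul_prod_pow_eq_prod_offDiag hrs.ne' ha₀
  rw [Fintype.card_fin] at hlower hequal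
  have hA : 0 ≤ ∏ i, a i := prod_nonneg fun i _ => ha₀ i
  rw [hGBM, ← Real.one_div_mul_pow_mul_pow_rpow hn hrs hA]
  have hexp : 0 ≤ ((n : ℝ) * ((n : ℝ) - 1))⁻¹ := by
    have : (1 : ℝ) ≤ n := by exact_mod_cast (by omega : 1 ≤ n)
    exact inv_nonneg.2 (mul_nonneg (by positivity) (by linarith))
  exact ⟨by gcongr, fun h => by rw [hequal h]⟩
end
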